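/- Let K be the complexification of a commutative fusion ring generated by a simple basis element x, and let G be the group of group-like characters acting on all characters by ⋆-multiplication. Call a character μ non-vanishing if μ(x) ≠ 0. Then the G-action is free on each orbit consisting of non-vanishing characters; in particular each non-vanishing orbit has cardinality |G|. -/

import Mathlib

open scoped BigOperators

/-- A commutative fusion ring: nonnegative integer fusion coefficients on a basis
`x_0, ..., x_m` (`x_0` the unit), a duality involution, and Frobenius-Perron
dimensions `d i > 0`. -/
structure FusionData (m : ℕ) where
  N : Fin (m + 1) → Fin (m + 1) → Fin (m + 1) → ℕ
  dual : Fin (m + 1) → Fin (m + 1)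
  dual_invol : ∀ i, dual (dual i) = i
  N_comm : ∀ i j k, N i j k = N j i k
  N_assoc : ∀ i j l k, ∑ t, N i j t * N t l k = ∑ t, N j l t * N i t k
  N_one : ∀ j k, N 0 j k = if k = j then 1 else 0
  N_pair : ∀ i j, N i j 0 = if j = dual i then 1 else 0
  d : Fin (m + 1) → ℝ
  d_pos : ∀ i, 0 < d i
  d_one : d 0 = 1
  d_mul : ∀ i j, d i * d j = ∑ k, (N i j k : ℝ) * d k
  d_dual : ∀ i, d (dual i) = d i

/-- A character of the complexified fusion ring, given by its values on the basis. -/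
def IsChar {m : ℕ} (F : FusionData m) (μ : Fin (m + 1) → ℂ) : Prop :=
  μ 0 = 1 ∧
  (∀ i j, μ i * μ j = ∑ k, (F.N i j k : ℂ) * μ k) ∧
  (∀ i, μ (F.dual i) = starRingEnd ℂ (μ i)) ∧
  (∀ i, ‖μ i‖ ≤ F.d i)

/-- The dual `⋆` product: `(μ ⋆ ν)(x_k / d_k) = μ(x_k / d_k) · ν(x_k / d_k)`. -/
noncomputable def starProd {m : ℕ} (F : FusionData m) (μ ν : Fin (m + 1) → ℂ) :
    Fin (m + 1) → ℂ :=
  fun i => μ i * ν i / (F.d i : ℂ)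

/-- A group-like character: `μ ⋆ μ# = μ_0 = FPdim`, where `μ#` is the complex
conjugate character. -/
def IsGroupLike {m : ℕ} (F : FusionData m) (μ : Fin (m + 1) → ℂ) : Prop :=
  IsChar F μ ∧ ∀ i, starProd F μ (fun k => starRingEnd ℂ (μ k)) i = (F.d i : ℂ)

/-- The coefficient of the basis element `x_k` in the `n`-th power of `x_a`. -/
def powCoeff {m : ℕ} (F : FusionData m) (a : Fin (m + 1)) : ℕ → Fin (m + 1) → ℕ
  | 0, k => if k = 0 then 1 else 0
  | n + 1, k => ∑ l, powCoeff F a n l * F.N a l k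

/-!
Write `u_t = z_t / d_t` for a group-like character `z`; then `|u_t| = 1`, and for a fusion product
`x_i x_j = ∑ N_ij^k x_k` the identity `d_i d_j u_i u_j = ∑ N_ij^k d_k u_k` exhibits the unit
complex number `u_i u_j` as a convex combination of points of the closed unit disc. Since unit
complex numbers are extreme points of the disc, `u_k = u_i u_j` whenever `N_ij^k ≠ 0`. As `x_a`
generates, every `x_k` occurs in some power `x_a^n`, so `u_k = u_a^n` and `z` is determined by
`z(x_a)`. Finally `(z ⋆ μ)(x_a) = z(x_a) μ(x_a) / d_a` recovers `z(x_a)` when `μ(x_a) ≠ 0`.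
-/

open Finset ComplexConjugate

namespace Complex

theorem eq_of_sum_smul_eq_sum_smul {ι : Type*} {s : Finset ι} {c : ι → ℝ} {u : ι → ℂ} {v : ℂ}
    (hc : ∀ t ∈ s, 0 ≤ c t) (hu : ∀ t ∈ s, ‖u t‖ ≤ 1) (hv : ‖v‖ = 1)
    (hsum : ∑ t ∈ s, c t • u t = (∑ t ∈ s, c t) • v) {k : ι} (hk : k ∈ s) (hck : c k ≠ 0) :
    u k = v := by
  set w : ι → ℂ := fun t => conj v * u t
  have hvv : conj v * v = 1 := by rw [mul_comm, mul_conj, normSq_eq_norm_sq, hv]; simp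
  have hw_norm : ∀ t ∈ s, ‖w t‖ ≤ 1 := fun t ht => by
    simpa [w, norm_mul, hv] using hu t ht
  -- Rotating by `conj v` moves `v` to `1`; then only real parts matter.
  have hw_sum : ∑ t ∈ s, c t * (w t).re = ∑ t ∈ s, c t := by
    have hrot : ∑ t ∈ s, (c t : ℂ) * w t = (∑ t ∈ s, c t : ℝ) :=
      calc ∑ t ∈ s, (c t : ℂ) * w t = conj v * ∑ t ∈ s, c t • u t := by
            simp only [mul_sum, real_smul, w, mul_left_comm]
        _ = (∑ t ∈ s, c t : ℝ) := by rw [hsum, real_smul, mul_left_comm, hvv, mul_one]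
    simpa only [re_sum, re_ofReal_mul, ofReal_re] using congrArg re hrot
  have hdefect : ∑ t ∈ s, c t * (1 - (w t).re) = 0 := by
    simp only [mul_sub, mul_one, sum_sub_distrib, hw_sum, sub_self]
  have hwk_re : (w k).re = 1 := by
    have hterm := (sum_eq_zero_iff_of_nonneg fun t ht =>
      mul_nonneg (hc t ht) (by linarith [re_le_norm (w t), hw_norm t ht])).mp hdefect k hk
    linarith [(mul_eq_zero.mp hterm).resolve_left hck]
  have hwk : w k = 1 := by
    have hwk_im : (w k).im = 0 := abs_re_eq_norm.mp <| le_antisymm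
      (abs_re_le_norm _) (by rw [hwk_re, abs_one]; exact hw_norm k hk)
    exact ext hwk_re hwk_im
  calc u k = v * w k := by rw [← mul_assoc, mul_comm v, hvv, one_mul]
    _ = v := by rw [hwk, mul_one]

end Complex

section

variable {m : ℕ} (F : FusionData m)

theorem FusionData.d_ne_zero (i : Fin (m + 1)) : (F.d i : ℂ) ≠ 0 :=
  Complex.ofReal_ne_zero.mpr (F.d_pos i).ne'

theorem isGroupLike_d : IsGroupLike F fun i => (F.d i : ℂ) := by
  refine ⟨⟨by simp [F.d_one], fun i j => ?_, fun i => by simp [F.d_dual], fun i => ?_⟩, fun i => ?_⟩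
  · simp only
    exact_mod_cast F.d_mul i j
  · simp [abs_of_pos (F.d_pos i)]
  · simp [starProd]

theorem starProd_d_left (μ : Fin (m + 1) → ℂ) :
    starProd F (fun i => (F.d i : ℂ)) μ = μ := by
  funext i
  simp [starProd, mul_div_right_comm, div_self (F.d_ne_zero i)]

namespace IsGroupLike

variable {F} {z : Fin (m + 1) → ℂ}

theorem norm_eq (hz : IsGroupLike F z) (i : Fin (m + 1)) :
    ‖z i‖ = F.d i := by
  have h := hz.2 i
  rw [starProd, div_eq_iff (F.d_ne_zero i), Complex.mul_conj, Complex.normSq_eq_norm_sq] at h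
  have hsq : ‖z i‖ ^ 2 = F.d i ^ 2 := by rw [sq (F.d i)]; exact_mod_cast h
  exact (sq_eq_sq₀ (norm_nonneg _) (F.d_pos i).le).mp hsq

theorem div_d_eq_mul (hz : IsGroupLike F z) {i j k : Fin (m + 1)}
    (hN : F.N i j k ≠ 0) : z k / F.d k = z i / F.d i * (z j / F.d j) := by
  have hunit : ∀ t, ‖z t / F.d t‖ = 1 := fun t => by
    rw [norm_div, hz.norm_eq, Complex.norm_real, Real.norm_of_nonneg (F.d_pos t).le,
      div_self (F.d_pos t).ne']
  refine Complex.eq_of_sum_smul_eq_sum_smul (s := univ) (c := fun t => F.N i j t * F.d t)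
    (fun t _ => mul_nonneg (Nat.cast_nonneg _) (F.d_pos t).le)
    (fun t _ => (hunit t).le) (by rw [norm_mul, hunit, hunit, one_mul]) ?_ (mem_univ k)
    (mul_ne_zero (Nat.cast_ne_zero.mpr hN) (F.d_pos k).ne')
  have hlhs : ∑ t, (F.N i j t * F.d t) • (z t / F.d t) = z i * z j := by
    rw [hz.1.2.1 i j]
    refine sum_congr rfl fun t _ => ?_
    rw [Complex.real_smul]
    push_cast
    field_simp [F.d_ne_zero t]
  rw [hlhs, ← F.d_mul, Complex.real_smul]
  push_cast
  field_simp [F.d_ne_zero i, F.d_ne_zero j]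

theorem div_d_eq_pow (hz : IsGroupLike F z) {a k : Fin (m + 1)} {n : ℕ}
    (hn : powCoeff F a n k ≠ 0) : z k / F.d k = (z a / F.d a) ^ n := by
  induction n generalizing k with
  | zero =>
    obtain rfl : k = 0 := by simpa [powCoeff] using hn
    simp [hz.1.1, F.d_one]
  | succ n ih =>
    obtain ⟨l, -, hl⟩ := exists_ne_zero_of_sum_ne_zero hn
    obtain ⟨hpow, hN⟩ := Nat.mul_ne_zero_iff.mp hl
    rw [hz.div_d_eq_mul hN, ih hpow, pow_succ']

theorem ext_of_apply_eq {a : Fin (m + 1)} (hgen : ∀ k, ∃ n, powCoeff F a n k ≠ 0)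
    {z₁ z₂ : Fin (m + 1) → ℂ} (h₁ : IsGroupLike F z₁) (h₂ : IsGroupLike F z₂)
    (hab : z₁ a = z₂ a) : z₁ = z₂ := by
  funext k
  obtain ⟨n, hn⟩ := hgen k
  have hk : z₁ k / F.d k = z₂ k / F.d k := by rw [h₁.div_d_eq_pow hn, h₂.div_d_eq_pow hn, hab]
  exact (div_left_inj' (F.d_ne_zero k)).mp hk

end IsGroupLike

variable {F} in
theorem apply_eq_of_starProd_eq {z₁ z₂ μ : Fin (m + 1) → ℂ} {a : Fin (m + 1)} (hμ : μ a ≠ 0)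
    (h : starProd F z₁ μ = starProd F z₂ μ) : z₁ a = z₂ a :=
  mul_right_cancel₀ hμ <| (div_left_inj' (F.d_ne_zero a)).mp (congrFun h a)

end

theorem free_action_on_nonvanishing_general {m : ℕ} (F : FusionData m)
    (a : Fin (m + 1)) (hgen : ∀ k, ∃ n, powCoeff F a n k ≠ 0)
    (μ : Fin (m + 1) → ℂ) (hnv : μ a ≠ 0) :
    (∀ z, IsGroupLike F z → starProd F z μ = μ → z = fun i => (F.d i : ℂ)) ∧
    (∀ z₁ z₂, IsGroupLike F z₁ → IsGroupLike F z₂ →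
      starProd F z₁ μ = starProd F z₂ μ → z₁ = z₂) := by
  have hinj : ∀ z₁ z₂, IsGroupLike F z₁ → IsGroupLike F z₂ →
      starProd F z₁ μ = starProd F z₂ μ → z₁ = z₂ := fun _ _ h₁ h₂ h =>
    h₁.ext_of_apply_eq hgen h₂ (apply_eq_of_starProd_eq hnv h)
  exact ⟨fun z hz hfix => hinj z _ hz (isGroupLike_d F) (by rw [hfix, starProd_d_left]), hinj⟩

/-- If the fusion ring is generated by a simple basis element `x_a`, the
action of the group of group-like characters by `⋆` is free on non-vanishing
characters (those with `μ(x) ≠ 0`); in particular `z ↦ z ⋆ μ` is injective on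
group-likes, so each non-vanishing orbit has cardinality `|G|`. -/
theorem free_action_on_nonvanishing {m : ℕ} (F : FusionData m)
    (a : Fin (m + 1)) (hgen : ∀ k, ∃ n, powCoeff F a n k ≠ 0)
    (μ : Fin (m + 1) → ℂ) (hμ : IsChar F μ) (hnv : μ a ≠ 0) :
    (∀ z, IsGroupLike F z → starProd F z μ = μ → z = fun i => (F.d i : ℂ)) ∧
    (∀ z₁ z₂, IsGroupLike F z₁ → IsGroupLike F z₂ →
      starProd F z₁ μ = starProd F z₂ μ → z₁ = z₂) :=
  free_action_on_nonvanishing_general F a hgen μ hnv
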